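/- arXiv:2002.10040 — 5 statements merged into one kernel-verified Lean document; each statement's English description precedes it below -/
import Mathlib

section
/- Let G be a cyclic graph: vertices v₁,...,v_n arranged in a single cycle, with edge i joining v_i to v_{i+1} (indices mod n), edge signs σ_i and connections φ_i in a commutative ring R. Then det(L_G) = σ (2 − φ − φ^{-1}), where σ = σ₁···σ_n and φ = φ₁···φ_n is the connection of the cycle. -/
/-- A finite signed graph with edge "connections" (holonomies) valued in the
units of a commutative ring `R`.  Each undirected edge is recorded once, with a
chosen direction from `src` to `tgt`; its reverse has the same sign and inverse
connection, and this symmetrization is built into the adjacency matrix. -/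
structure CGraph (R : Type) [CommRing R] where
  V : Type
  E : Type
  [fV : Fintype V]
  [dV : DecidableEq V]
  [fE : Fintype E]
  [dE : DecidableEq E]
  src : E → V
  tgt : E → V
  sign : E → R
  conn : E → Rˣ

attribute [instance] CGraph.fV CGraph.dV CGraph.fE CGraph.dE

namespace CGraph

variable {R : Type} [CommRing R]

/-- The adjacency matrix: the `(i,j)` entry is the sum of `σ_e φ_e` over
directed edges from `i` to `j`. -/
def adj (G : CGraph R) : Matrix G.V G.V R := fun i j =>
  ∑ e : G.E,
    ((if G.src e = i ∧ G.tgt e = j then G.sign e * (G.conn e : R) else 0)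
      + (if G.src e = j ∧ G.tgt e = i then G.sign e * ((G.conn e)⁻¹ : Rˣ) else 0))

/-- The signed degree of a vertex (loops counted twice). -/
def deg (G : CGraph R) : G.V → R := fun i =>
  ∑ e : G.E, G.sign e *
    ((if G.src e = i then 1 else 0) + (if G.tgt e = i then 1 else 0))

/-- The Laplacian matrix of `G`, normalized (as in Forman's formula) so that
its determinant is the Laplacian polynomial. -/
def lap (G : CGraph R) : Matrix G.V G.V R := Matrix.diagonal G.deg - G.adj

/-- The Laplacian determinant of `G`. -/
def lapDet (G : CGraph R) : R := G.lap.det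

end CGraph

/-- The cyclic graph with `n + 1` vertices `v₀, …, v_n` arranged in a single
cycle, edge `i` joining `vᵢ` to `v_{i+1}` (indices mod `n + 1`), with signs `σ`
and connections `φ`. -/
def cyclicGraph (R : Type) [CommRing R] (n : ℕ) (σ : Fin (n + 1) → R)
    (φ : Fin (n + 1) → Rˣ) : CGraph R where
  V := Fin (n + 1)
  E := Fin (n + 1)
  src i := i
  tgt i := i + 1
  sign := σ
  conn := φ

/-! `L_G` factors as `∂_{φ⁻¹} · diag σ · ∂_φᵀ`, where `∂_c` is the vertex–edge incidence matrix
with entry `1` at the source of `e` and `-c e` at its target. For a cycle `∂_c` is square, and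
expanding along its last column leaves two triangular minors, giving `det ∂_c = 1 - ∏ c`; hence
`det L_G = (1 - φ⁻¹) σ (1 - φ)`. -/

open Matrix Finset

section

variable {R : Type} [CommRing R]

namespace CGraph

def incidence (G : CGraph R) (c : G.E → R) : Matrix G.V G.E R :=
  fun v e => (if G.src e = v then 1 else 0) - (if G.tgt e = v then c e else 0)

theorem lap_eq_incidence_mul (G : CGraph R) :
    G.lap = G.incidence (fun e => ((G.conn e)⁻¹ : Rˣ)) * diagonal G.sign
      * (G.incidence (fun e => G.conn e))ᵀ := by
  ext i j
  rw [lap, Matrix.sub_apply, diagonal_apply, mul_apply]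
  simp only [deg, adj, incidence, mul_diagonal, transpose_apply]
  rw [← boole_mul, mul_sum, ← sum_sub_distrib]
  refine sum_congr rfl fun e _ => ?_
  have hinv : ((G.conn e)⁻¹ : Rˣ) * (G.conn e : R) = 1 := (G.conn e).inv_mul
  generalize G.src e = s, G.tgt e = t, (((G.conn e)⁻¹ : Rˣ) : R) = b, (G.conn e : R) = a at hinv
  -- the product `b * a` only occurs when `t = i = j`, where it is cancelled by the degree term
  split_ifs <;> subst_vars <;> first | tauto | ring1 | linear_combination -G.sign e * hinv

end CGraph

def cycleIncidence {n : ℕ} (w : Fin (n + 1) → R) : Matrix (Fin (n + 1)) (Fin (n + 1)) R :=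
  of fun v e => (if e = v then 1 else 0) - (if e + 1 = v then w e else 0)

theorem det_cycleIncidence {n : ℕ} (w : Fin (n + 1) → R) :
    (cycleIncidence w).det = 1 - ∏ e, w e := by
  cases n with
  | zero => simp [det_unique, cycleIncidence]
  | succ m =>
    set A := cycleIncidence w
    have h_last_col : ∀ i, A i (Fin.last _)
        = (if i = Fin.last _ then 1 else 0) - (if i = 0 then w (Fin.last _) else 0) := by
      intro i
      simp [A, cycleIncidence, Fin.last_add_one, eq_comm]
    have h_minor_last : (A.submatrix (Fin.last _).succAbove (Fin.last _).succAbove).det = 1 := by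
      rw [det_of_isLowerTriangular]
      · simp [A, cycleIncidence, Fin.coeSucc_eq_succ, Fin.castSucc_lt_succ.ne']
      · intro i j (hij : i < j)
        have h₁ : (j : ℕ) ≠ i := by omega
        have h₂ : (j : ℕ) + 1 ≠ i := by omega
        simp [A, cycleIncidence, Fin.coeSucc_eq_succ, Fin.ext_iff, h₁, h₂]
    have h_minor_zero : (A.submatrix (0 : Fin (m + 2)).succAbove (Fin.last _).succAbove).det
        = ∏ i : Fin (m + 1), -w i.castSucc := by
      rw [det_of_isUpperTriangular]
      · simp [A, cycleIncidence, Fin.coeSucc_eq_succ, Fin.castSucc_lt_succ.ne]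
      · intro i j (hij : j < i)
        have h₁ : (j : ℕ) ≠ i + 1 := by omega
        have h₂ : (j : ℕ) ≠ i := by omega
        simp [A, cycleIncidence, Fin.coeSucc_eq_succ, Fin.ext_iff, h₁, h₂]
    have h_sq : ((-1 : R) ^ (m + 1)) ^ 2 = 1 := by rw [← pow_mul, pow_mul', neg_one_sq, one_pow]
    rw [det_succ_column A (Fin.last _), Fintype.sum_eq_add 0 (Fin.last _) Fin.last_pos.ne
      (fun i hi => by simp [h_last_col, hi.1, hi.2]), h_last_col, h_last_col,
      h_minor_zero, h_minor_last, prod_neg, Fin.prod_univ_castSucc (f := w)]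
    simp [Fin.last_pos.ne, Fin.last_pos.ne']
    linear_combination (-w (Fin.last _) * ∏ i : Fin (m + 1), w i.castSucc) * h_sq

theorem lapDet_cyclicGraph_eq_det {n : ℕ} (σ : Fin (n + 1) → R) (φ : Fin (n + 1) → Rˣ) :
    (cyclicGraph R n σ φ).lapDet
      = (cycleIncidence (fun e => (((φ e)⁻¹ : Rˣ) : R)) * diagonal σ
          * (cycleIncidence fun e => (φ e : R))ᵀ).det := by
  rw [CGraph.lapDet, CGraph.lap_eq_incidence_mul]
  rfl

end

theorem lapDet_cyclicGraph_general {R : Type} [CommRing R] (n : ℕ) (σ : Fin (n + 1) → R)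
    (φ : Fin (n + 1) → Rˣ) :
    (cyclicGraph R n σ φ).lapDet
      = (∏ i, σ i) *
        (2 - ((∏ i, φ i : Rˣ) : R) - (((∏ i, φ i)⁻¹ : Rˣ) : R)) := by
  rw [lapDet_cyclicGraph_eq_det, det_mul, det_mul, det_transpose, det_diagonal,
    det_cycleIncidence, det_cycleIncidence, ← prod_inv_distrib, Units.coe_prod, Units.coe_prod]
  have hinv : (∏ i, ((φ i)⁻¹ : Rˣ) : R) * ∏ i, (φ i : R) = 1 := by
    rw [← prod_mul_distrib]
    exact prod_eq_one fun i _ => (φ i).inv_mul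
  linear_combination (∏ i, σ i) * hinv

/-- For a cyclic graph, `det L_G = σ (2 − φ − φ⁻¹)` where `σ` is the product of
the edge signs and `φ` is the connection of the cycle. -/
theorem lapDet_cyclicGraph {R : Type} [CommRing R] (n : ℕ) (σ : Fin (n + 1) → R)
    (φ : Fin (n + 1) → Rˣ) (hσ : ∀ i, σ i = 1 ∨ σ i = -1) :
    (cyclicGraph R n σ φ).lapDet
      = (∏ i, σ i) *
        (2 - ((∏ i, φ i : Rˣ) : R) - (((∏ i, φ i)⁻¹ : Rˣ) : R)) :=
  lapDet_cyclicGraph_general n σ φ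
end

section
/- Let Λ = ℤ[x^{±1}, y^{±1}], let M be the Λ-module presented by the 2×2 matrix with rows (3, −1−x−y) and (−1−x^{-1}−y^{-1}, 3), and let N be the Λ-module presented by the 1×1 matrix (6 − x − x^{-1} − y − y^{-1} − x y^{-1} − x^{-1} y). Then M and N are not isomorphic as Λ-modules. -/
/-- The Laurent polynomial ring `Λ = ℤ[x^{±1}, y^{±1}]`, realized as the group
ring of `ℤ × ℤ` over `ℤ`. -/
abbrev Lau2 : Type := AddMonoidAlgebra ℤ (ℤ × ℤ)

/-- The monomial `x`. -/
noncomputable def X : Lau2 := AddMonoidAlgebra.single ((1, 0) : ℤ × ℤ) 1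
/-- The monomial `x⁻¹`. -/
noncomputable def X' : Lau2 := AddMonoidAlgebra.single ((-1, 0) : ℤ × ℤ) 1
/-- The monomial `y`. -/
noncomputable def Y : Lau2 := AddMonoidAlgebra.single ((0, 1) : ℤ × ℤ) 1
/-- The monomial `y⁻¹`. -/
noncomputable def Y' : Lau2 := AddMonoidAlgebra.single ((0, -1) : ℤ × ℤ) 1

/-- The presentation matrix of the Laplacian module of the theta-graph. -/
noncomputable def P : Matrix (Fin 2) (Fin 2) Lau2 := !![3, -1 - X - Y; -1 - X' - Y', 3]

/-- The Laplacian module `M` of the theta-graph: `Λ²` modulo the row space of `P`. -/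
noncomputable abbrev M : Type := (Fin 2 → Lau2) ⧸ LinearMap.range P.vecMulLinear

/-- The presentation matrix of the Laplacian module of the dual graph. -/
noncomputable def Q : Matrix (Fin 1) (Fin 1) Lau2 :=
  !![6 - X - X' - Y - Y' - X * Y' - X' * Y]

/-- The Laplacian module `N` of the dual graph: `Λ` modulo the row space of `Q`. -/
noncomputable abbrev N : Type := (Fin 1 → Lau2) ⧸ LinearMap.range Q.vecMulLinear

/-!
Count `Λ`-linear maps into `𝔽₃`, made a `Λ`-module through the augmentation `x, y ↦ 1`.
Every entry of `P` maps to `0` in `𝔽₃`, so any assignment of values to the two generators of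
`M` extends to a linear map on `M`: there are `9` of them. The module `N` is cyclic, so a linear
map on it is determined by its value at one generator: there are at most `3` of them.
-/

section CokernelHom

variable {R V ι : Type*} [CommRing R] [AddCommGroup V] [Module R V] [Fintype ι] [DecidableEq ι]

def quotientPiEval (U : Submodule R (ι → R)) (f : (ι → R) ⧸ U →ₗ[R] V) : ι → V :=
  fun i => f (U.mkQ (Pi.single i 1))

theorem quotientPiEval_injective (U : Submodule R (ι → R)) :
    Function.Injective (quotientPiEval (V := V) U) := fun _ _ h =>
  Submodule.linearMap_qext _ (LinearMap.pi_ext' fun i => LinearMap.ext_ring (congrFun h i))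

theorem quotientPiEval_surjective_of_smul_eq_zero {κ : Type*} [Fintype κ] (P : Matrix κ ι R)
    (hP : ∀ k j (v : V), P k j • v = 0) :
    Function.Surjective (quotientPiEval (V := V) (LinearMap.range P.vecMulLinear)) := by
  intro a
  have hker : LinearMap.range P.vecMulLinear ≤ LinearMap.ker (Fintype.linearCombination R a) := by
    rintro _ ⟨w, rfl⟩
    simp only [LinearMap.mem_ker, Fintype.linearCombination_apply, Matrix.vecMulLinear_apply,
      Matrix.vecMul, dotProduct, Finset.sum_smul, mul_smul, hP, smul_zero, Finset.sum_const_zero]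
  refine ⟨Submodule.liftQ _ _ hker, funext fun i => ?_⟩
  simp [quotientPiEval]

end CokernelHom

noncomputable def augmentationMod3 : Lau2 →+* ZMod 3 :=
  (AddMonoidAlgebra.lift ℤ (ZMod 3) (ℤ × ℤ) 1).toRingHom

noncomputable local instance : Module Lau2 (ZMod 3) := Module.compHom _ augmentationMod3

theorem augmentationMod3_single (a : ℤ × ℤ) (n : ℤ) :
    augmentationMod3 (AddMonoidAlgebra.single a n) = n := by
  simp [augmentationMod3, AddMonoidAlgebra.lift_single]

theorem augmentationMod3_P (i j : Fin 2) : augmentationMod3 (P i j) = 0 := by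
  fin_cases i <;> fin_cases j <;>
    simp [P, X, X', Y, Y', augmentationMod3_single, map_ofNat] <;> decide

theorem P_smul_eq_zero (i j : Fin 2) (v : ZMod 3) : P i j • v = 0 :=
  show augmentationMod3 (P i j) * v = 0 by rw [augmentationMod3_P, zero_mul]

/-- The Laplacian modules `M` and `N` of the theta-graph and of its dual graph
are not isomorphic as `Λ`-modules. -/
theorem theta_modules_not_isomorphic : IsEmpty (M ≃ₗ[Lau2] N) := by
  refine ⟨fun e => ?_⟩
  have homM := quotientPiEval_surjective_of_smul_eq_zero P P_smul_eq_zero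
  have homN := quotientPiEval_injective (V := ZMod 3) (LinearMap.range Q.vecMulLinear)
  have transfer := (e.arrowCongr (LinearEquiv.refl Lau2 (ZMod 3)) :
    (M →ₗ[Lau2] ZMod 3) ≃ₗ[Lau2] (N →ₗ[Lau2] ZMod 3)).injective
  have hcard : Fintype.card (Fin 2 → ZMod 3) ≤ Fintype.card (Fin 1 → ZMod 3) :=
    Fintype.card_le_of_injective _ (homN.comp (transfer.comp (Function.injective_surjInv homM)))
  simp at hcard
end

section
/- Let G be a signed graph with connections over a commutative ring R, and suppose G has a vertex w of degree 1 joined to a vertex v by a single edge e of sign +1 and connection φ_e, with no other edges at w. Let G' be the graph obtained from G by deleting w and e. Then the cokernel of L_G and the cokernel of L_{G'} are isomorphic R-modules. -/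
/-- The cokernel of a square matrix `P` over `R`: `Rⁿ` modulo the image of the
linear map given by `P`. -/
abbrev Matrix.coker {R : Type} [CommRing R] {ι : Type} [Fintype ι] [DecidableEq ι]
    (P : Matrix ι ι R) : Type :=
  (ι → R) ⧸ LinearMap.range P.mulVecLin

namespace CGraph

/-- Deletion of a degree-1 vertex `tgt e0` together with its unique incident
edge `e0`. -/
def deleteLeaf {R : Type} [CommRing R] (G : CGraph R) (e0 : G.E)
    (hw : ∀ e, e ≠ e0 → G.src e ≠ G.tgt e0 ∧ G.tgt e ≠ G.tgt e0) : CGraph R where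
  V := {u : G.V // u ≠ G.tgt e0}
  E := {e : G.E // e ≠ e0}
  src e := ⟨G.src e.1, (hw e.1 e.2).1⟩
  tgt e := ⟨G.tgt e.1, (hw e.1 e.2).2⟩
  sign e := G.sign e.1
  conn e := G.conn e.1

end CGraph

/-!
The leaf `w` has degree `1` and no loop, so `L_G w w = 1` and the generator `w` of the
cokernel can be eliminated: a matrix with pivot `1` at `(w, w)` has the same cokernel as its
Schur complement there. For the leaf, the Schur complement subtracts `φ_e φ_e⁻¹ = 1` from the
diagonal entry at `v`, which is exactly the contribution of `e` to the degree of `v`; all other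
entries are untouched, so the Schur complement is `L_{G'}`.
-/

namespace Matrix

variable {R ι : Type} [CommRing R]

/-- For a pivot `M w w = 1`, the Schur complement of the `1 × 1` block at `(w, w)`. -/
def eliminate (M : Matrix ι ι R) (w : ι) : Matrix {i // i ≠ w} {i // i ≠ w} R :=
  fun u j => M u j - M u w * M w j

/-- The row operations clearing column `w` with the pivot row, followed by deleting row `w`. -/
def eliminateRows (M : Matrix ι ι R) (w : ι) : (ι → R) →ₗ[R] ({i // i ≠ w} → R) where
  toFun x u := x u - M u w * x w
  map_add' x y := by ext; simp only [Pi.add_apply]; ring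
  map_smul' c x := by ext; simp only [Pi.smul_apply, smul_eq_mul, RingHom.id_apply]; ring

variable [DecidableEq ι]

def extendByZero (w : ι) (y : {i // i ≠ w} → R) : ι → R :=
  fun i => if h : i = w then 0 else y ⟨i, h⟩

@[simp]
lemma extendByZero_apply_val (w : ι) (y : {i // i ≠ w} → R) (u : {i // i ≠ w}) :
    extendByZero w y u = y u := dif_neg u.2

@[simp]
lemma extendByZero_apply_self (w : ι) (y : {i // i ≠ w} → R) : extendByZero w y w = 0 :=
  dif_pos rfl

variable {M : Matrix ι ι R} {w : ι}

lemma eliminateRows_extendByZero (y : {i // i ≠ w} → R) :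
    M.eliminateRows w (extendByZero w y) = y := by
  ext u
  simp [eliminateRows]

variable [Fintype ι]

lemma eliminateRows_mulVec (hpiv : M w w = 1) (x : ι → R) :
    M.eliminateRows w (M *ᵥ x) = M.eliminate w *ᵥ fun j => x j := by
  ext u
  simp only [eliminateRows, eliminate, LinearMap.coe_mk, AddHom.coe_mk, mulVec, dotProduct,
    Fintype.sum_eq_add_sum_subtype_ne _ w, hpiv, sub_mul, Finset.sum_sub_distrib, mul_assoc]
  simp only [← Finset.mul_sum]
  ring

lemma mulVec_single_of_eliminateRows_eq_zero (hpiv : M w w = 1) {z : ι → R}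
    (hz : M.eliminateRows w z = 0) : M *ᵥ Pi.single w (z w) = z := by
  ext i
  rw [mulVec_single, Pi.smul_apply, col_apply, op_smul_eq_mul]
  by_cases hi : i = w
  · rw [hi, hpiv, one_mul]
  · simpa [eliminateRows, sub_eq_zero, eq_comm] using congr_fun hz ⟨i, hi⟩

lemma comap_eliminateRows_range (hpiv : M w w = 1) :
    (LinearMap.range (M.eliminate w).mulVecLin).comap (M.eliminateRows w) =
      LinearMap.range M.mulVecLin := by
  ext x
  simp only [Submodule.mem_comap, LinearMap.mem_range, mulVecLin_apply]
  constructor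
  · rintro ⟨a, ha⟩
    set y := extendByZero w a
    have hrest : M.eliminateRows w (x - M *ᵥ y) = 0 := by
      rw [map_sub, eliminateRows_mulVec hpiv, ← ha]
      simp [y]
    refine ⟨y + Pi.single w ((x - M *ᵥ y) w), ?_⟩
    rw [mulVec_add, mulVec_single_of_eliminateRows_eq_zero hpiv hrest, add_sub_cancel]
  · rintro ⟨y, rfl⟩
    exact ⟨_, (eliminateRows_mulVec hpiv y).symm⟩

noncomputable def cokerEquivEliminate (hpiv : M w w = 1) :
    M.coker ≃ₗ[R] (M.eliminate w).coker :=
  let f := (LinearMap.range (M.eliminate w).mulVecLin).mkQ ∘ₗ M.eliminateRows w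
  have hf : Function.Surjective f := (Submodule.mkQ_surjective _).comp
    fun y => ⟨_, eliminateRows_extendByZero y⟩
  have hker : LinearMap.range M.mulVecLin = LinearMap.ker f := by
    rw [LinearMap.ker_comp, Submodule.ker_mkQ, comap_eliminateRows_range hpiv]
  (Submodule.quotEquivOfEq _ _ hker).trans (f.quotKerEquivOfSurjective hf)

end Matrix

namespace CGraph

variable {R : Type} [CommRing R]

lemma lap_apply_self (G : CGraph R) (u : G.V) : G.lap u u = G.deg u - G.adj u u := by
  rw [lap, Matrix.sub_apply, Matrix.diagonal_apply_eq]

lemma lap_apply_of_ne (G : CGraph R) {u j : G.V} (h : u ≠ j) : G.lap u j = -G.adj u j := by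
  rw [lap, Matrix.sub_apply, Matrix.diagonal_apply_ne _ h, zero_sub]

variable (G : CGraph R) {e0 : G.E}
  (hw : ∀ e, e ≠ e0 → G.src e ≠ G.tgt e0 ∧ G.tgt e ≠ G.tgt e0)

include hw

lemma sum_edges_eq_add_sum_deleteLeaf {M : Type} [AddCommMonoid M] (f : G.E → M) :
    ∑ e, f e = f e0 + ∑ e : (G.deleteLeaf e0 hw).E, f e.1 :=
  Fintype.sum_eq_add_sum_subtype_ne f e0

lemma deg_deleteLeaf (he : G.sign e0 = 1) (u : G.V) (hu : u ≠ G.tgt e0) :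
    (G.deleteLeaf e0 hw).deg ⟨u, hu⟩ = G.deg u - if G.src e0 = u then 1 else 0 := by
  simp only [deg]
  rw [G.sum_edges_eq_add_sum_deleteLeaf hw]
  simp [deleteLeaf, he, hu.symm]

lemma adj_deleteLeaf (u j : G.V) (hu : u ≠ G.tgt e0) (hj : j ≠ G.tgt e0) :
    (G.deleteLeaf e0 hw).adj ⟨u, hu⟩ ⟨j, hj⟩ = G.adj u j := by
  simp only [adj]
  rw [G.sum_edges_eq_add_sum_deleteLeaf hw]
  simp [deleteLeaf, hu.symm, hj.symm]

variable (hv : G.src e0 ≠ G.tgt e0) (he : G.sign e0 = 1)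
include hv he

lemma lap_tgt_tgt : G.lap (G.tgt e0) (G.tgt e0) = 1 := by
  simp [lap, deg, adj, Fintype.sum_eq_add_sum_subtype_ne _ e0, he, hv,
    fun e : {e // e ≠ e0} => hw e e.2]

lemma adj_apply_tgt (u : G.V) :
    G.adj u (G.tgt e0) = if G.src e0 = u then (G.conn e0 : R) else 0 := by
  simp [adj, Fintype.sum_eq_add_sum_subtype_ne _ e0, he, hv, fun e : {e // e ≠ e0} => hw e e.2]

lemma adj_tgt_apply (j : G.V) :
    G.adj (G.tgt e0) j = if G.src e0 = j then (((G.conn e0)⁻¹ : Rˣ) : R) else 0 := by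
  simp [adj, Fintype.sum_eq_add_sum_subtype_ne _ e0, he, hv, fun e : {e // e ≠ e0} => hw e e.2]

lemma lap_deleteLeaf : (G.deleteLeaf e0 hw).lap = G.lap.eliminate (G.tgt e0) := by
  ext ⟨u, hu⟩ ⟨j, hj⟩
  rw [Matrix.eliminate, G.lap_apply_of_ne hu, G.lap_apply_of_ne (Ne.symm hj),
    G.adj_apply_tgt hw hv he, G.adj_tgt_apply hw hv he, neg_mul_neg]
  by_cases h : u = j
  · subst h
    -- the vertex type of `deleteLeaf` is a subtype only after unfolding: pass the vertex explicitly
    rw [lap_apply_self (G.deleteLeaf e0 hw) ⟨u, hu⟩, G.deg_deleteLeaf hw he,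
      G.adj_deleteLeaf hw, G.lap_apply_self]
    by_cases hvu : G.src e0 = u
    · simp only [hvu, if_true, Units.mul_inv]
      ring
    · simp [hvu]
  · rw [lap_apply_of_ne (G.deleteLeaf e0 hw) (mt (congrArg Subtype.val) h),
      G.adj_deleteLeaf hw, G.lap_apply_of_ne h]
    by_cases hvu : G.src e0 = u <;> simp [hvu, h]

end CGraph

theorem coker_deleteLeaf_general {R : Type} [CommRing R] (G : CGraph R)
    (e0 : G.E)
    (hv : G.src e0 ≠ G.tgt e0) (he : G.sign e0 = 1)
    (hw : ∀ e, e ≠ e0 → G.src e ≠ G.tgt e0 ∧ G.tgt e ≠ G.tgt e0) :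
    Nonempty (G.lap.coker ≃ₗ[R] (G.deleteLeaf e0 hw).lap.coker) := by
  rw [G.lap_deleteLeaf hw hv he]
  exact ⟨Matrix.cokerEquivEliminate (G.lap_tgt_tgt hw hv he)⟩

/-- If `w = tgt e0` is a vertex of degree 1, joined to `v = src e0` by the
single edge `e0` of sign `+1`, then deleting `w` and `e0` does not change the
Laplacian module: the cokernels of `L_G` and `L_{G'}` are isomorphic
`R`-modules. -/
theorem coker_deleteLeaf {R : Type} [CommRing R] (G : CGraph R)
    (hsign : ∀ e, G.sign e = 1 ∨ G.sign e = -1) (e0 : G.E)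
    (hv : G.src e0 ≠ G.tgt e0) (he : G.sign e0 = 1)
    (hw : ∀ e, e ≠ e0 → G.src e ≠ G.tgt e0 ∧ G.tgt e ≠ G.tgt e0) :
    Nonempty (G.lap.coker ≃ₗ[R] (G.deleteLeaf e0 hw).lap.coker) :=
  coker_deleteLeaf_general G e0 hv he hw
end

section
/- Let L be an n×n matrix over a commutative ring R whose first row has invertible first entry a (a a unit of R). Let L' be the (n−1)×(n−1) matrix obtained from L by the row/column operations eliminating the first row and column using a (i.e., L'_{ij} = L_{(i+1)(j+1)} − L_{(i+1)1} a^{-1} L_{1(j+1)}). Then coker(L) ≅ coker(L') as R-modules, and det(L) = a · det(L'). -/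
open Matrix LinearMap

theorem LinearMap.range_comp_comp_of_range_eq_top {R M₀ M₁ M₂ M₃ : Type*} [Semiring R]
    [AddCommMonoid M₀] [AddCommMonoid M₁] [AddCommMonoid M₂] [AddCommMonoid M₃]
    [Module R M₀] [Module R M₁] [Module R M₂] [Module R M₃]
    (e : M₂ →ₗ[R] M₃) (f : M₁ →ₗ[R] M₂) {g : M₀ →ₗ[R] M₁} (hg : range g = ⊤) :
    range (e ∘ₗ f ∘ₗ g) = (range f).map e := by
  rw [range_comp, range_comp_of_range_eq_top _ hg]

namespace Matrix

variable {R : Type} [CommRing R] {m n : Type} [Fintype m] [DecidableEq m] [Fintype n]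
  [DecidableEq n]

noncomputable def cokerReindexEquiv (e : m ≃ n) (M : Matrix m m R) :
    (reindex e e M).coker ≃ₗ[R] M.coker :=
  (Submodule.Quotient.equiv _ _ (LinearEquiv.funCongrLeft R R e.symm)
    (by rw [mulVecLin_reindex, range_comp_comp_of_range_eq_top _ _ (LinearEquiv.range _)])).symm

noncomputable def cokerMulEquiv (E M F : Matrix m m R) [Invertible E] [Invertible F] :
    (E * M * F).coker ≃ₗ[R] M.coker :=
  (Submodule.Quotient.equiv _ _ (toLinearEquiv' E ‹_›)
    (by rw [mulVecLin_mul, mulVecLin_mul, comp_assoc]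
        exact (range_comp_comp_of_range_eq_top _ _ (toLinearEquiv' F ‹_›).range).symm)).symm

omit [DecidableEq n] in
theorem range_mulVecLin_fromBlocks_zero_zero (A : Matrix m m R) [Invertible A] (D : Matrix n n R) :
    range (fromBlocks A 0 0 D).mulVecLin = (range D.mulVecLin).comap (funLeft R R Sum.inr) := by
  ext v
  simp only [Submodule.mem_comap, LinearMap.mem_range, mulVecLin_apply]
  constructor
  · rintro ⟨x, rfl⟩
    exact ⟨x ∘ Sum.inr, by ext i; simp [fromBlocks_mulVec]⟩
  · rintro ⟨y, hy⟩
    refine ⟨Sum.elim (⅟A *ᵥ (v ∘ Sum.inl)) y, ?_⟩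
    ext (i | i)
    · simp [fromBlocks_mulVec, mulVec_mulVec]
    · simp [fromBlocks_mulVec, hy]

noncomputable def cokerFromBlocksZeroZeroEquiv (A : Matrix m m R) [Invertible A]
    (D : Matrix n n R) :
    (fromBlocks A 0 0 D).coker ≃ₗ[R] D.coker :=
  (Submodule.quotEquivOfEq _ _
      (by rw [range_mulVecLin_fromBlocks_zero_zero, ker_comp, Submodule.ker_mkQ])).trans
    (((range D.mulVecLin).mkQ ∘ₗ funLeft R R Sum.inr).quotKerEquivOfSurjective
      ((Submodule.mkQ_surjective _).comp
        (funLeft_surjective_of_injective R R _ Sum.inr_injective)))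

noncomputable def cokerFromBlocksEquivSchur (A : Matrix m m R) (B : Matrix m n R)
    (C : Matrix n m R) (D : Matrix n n R) [Invertible A] :
    (fromBlocks A B C D).coker ≃ₗ[R] (D - C * ⅟A * B).coker :=
  letI : Invertible (1 : Matrix m m R) := invertibleOne
  letI : Invertible (1 : Matrix n n R) := invertibleOne
  letI := fromBlocksZero₁₂Invertible 1 (C * ⅟A) (1 : Matrix n n R)
  letI := fromBlocksZero₂₁Invertible 1 (⅟A * B) (1 : Matrix n n R)
  (Submodule.quotEquivOfEq _ _ (by rw [fromBlocks_eq_of_invertible₁₁ A])).trans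
    ((cokerMulEquiv _ _ _).trans (cokerFromBlocksZeroZeroEquiv A _))

end Matrix

def Fin.sumSuccEquiv (n : ℕ) : Fin 1 ⊕ Fin n ≃ Fin (n + 1) :=
  finSumFinEquiv.trans (finCongr (add_comm 1 n))

theorem Matrix.reindex_sumSuccEquiv_symm {R : Type*} [Zero R] {n : ℕ}
    (L : Matrix (Fin (n + 1)) (Fin (n + 1)) R) :
    reindex (Fin.sumSuccEquiv n).symm (Fin.sumSuccEquiv n).symm L =
      fromBlocks (diagonal fun _ => L 0 0) (of fun _ j => L 0 j.succ) (of fun i _ => L i.succ 0)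
        (L.submatrix Fin.succ Fin.succ) := by
  have h0 (i : Fin 1) : Fin.sumSuccEquiv n (.inl i) = 0 := by
    ext; simp [Fin.sumSuccEquiv, Fin.fin_one_eq_zero i]
  have hs (j : Fin n) : Fin.sumSuccEquiv n (.inr j) = j.succ := by
    ext; simp [Fin.sumSuccEquiv]
  ext (i | i) (j | j) <;> simp [h0, hs, Fin.fin_one_eq_zero]

/-- Pivot/Schur-complement lemma: if the `(0,0)` entry of `L` is a unit `u` and
`L'` is obtained from `L` by eliminating the first row and column using this
pivot (`L'ᵢⱼ = L_{i+1,j+1} − L_{i+1,0} u⁻¹ L_{0,j+1}`), then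
`coker L ≅ coker L'` and `det L = u · det L'`. -/
theorem schur_pivot {R : Type} [CommRing R] {n : ℕ}
    (L : Matrix (Fin (n + 1)) (Fin (n + 1)) R) (u : Rˣ) (hu : (u : R) = L 0 0)
    (L' : Matrix (Fin n) (Fin n) R)
    (hL' : ∀ i j, L' i j = L i.succ j.succ - L i.succ 0 * ((u⁻¹ : Rˣ) : R) * L 0 j.succ) :
    Nonempty (L.coker ≃ₗ[R] L'.coker) ∧ L.det = (u : R) * L'.det := by
  let := u.invertible
  let : Invertible (scalar (Fin 1) (u : R)) := Invertible.map (scalar (Fin 1)) (u : R)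
  have hblocks := reindex_sumSuccEquiv_symm L
  rw [← hu, ← scalar_apply] at hblocks
  set B : Matrix (Fin 1) (Fin n) R := of fun _ j => L 0 j.succ
  set C : Matrix (Fin n) (Fin 1) R := of fun i _ => L i.succ 0
  obtain rfl : L' = L.submatrix Fin.succ Fin.succ - C * ⅟(scalar (Fin 1) (u : R)) * B := by
    ext i j
    rw [show ⅟(scalar (Fin 1) (u : R)) = scalar (Fin 1) ⅟(u : R) from rfl]
    simp [hL', B, C, mul_apply]
  constructor
  · exact ⟨(cokerReindexEquiv _ L).symm ≪≫ₗ Submodule.quotEquivOfEq _ _ (by rw [hblocks]) ≪≫ₗ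
      cokerFromBlocksEquivSchur _ _ _ _⟩
  · rw [← det_reindex_self (Fin.sumSuccEquiv n).symm, hblocks, det_fromBlocks₁₁]
    simp
end

section
/- Let G be a finite signed graph with connections φ_e valued in the units of a commutative ring R. Then det(L_G) = Σ_F (Π_{e ∈ E_F} σ_e) · (Π_{cycles C of F} (2 − φ_C − φ_C^{-1})), where the sum is over all cycle-rooted spanning forests F of G (spanning subgraphs each of whose components contains exactly one cycle) and φ_C is the connection of the cycle C with a chosen orientation. -/
namespace CGraph

variable {R : Type} [CommRing R]

/-- A cycle-rooted spanning forest of `G`, together with an orientation of each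
of its cycles: equivalently, a choice of one outgoing (directed) edge at each
vertex, no (undirected) edge being used twice.  Each component of the resulting
spanning subgraph contains a unique cycle; tree edges are oriented toward the
cycle of their component, and the cycles acquire an orientation. -/
structure OCRSF (G : CGraph R) where
  /-- the edge chosen at each vertex -/
  f : G.V → G.E
  /-- the direction in which the chosen edge is traversed: `true` means from
  `src` to `tgt` -/
  dir : G.V → Bool
  hsrc : ∀ v, (if dir v then G.src (f v) else G.tgt (f v)) = v
  hinj : Function.Injective f

variable {G : CGraph R}

/-- The successor of a vertex: the other end of its chosen directed edge. -/
def OCRSF.next (c : G.OCRSF) (v : G.V) : G.V :=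
  if c.dir v then G.tgt (c.f v) else G.src (c.f v)

/-- The connection of the directed edge chosen at `v`. -/
def OCRSF.stepConn (c : G.OCRSF) (v : G.V) : Rˣ :=
  if c.dir v then G.conn (c.f v) else (G.conn (c.f v))⁻¹

/-- A vertex lies on a cycle iff it is a periodic point of `next`. -/
def OCRSF.onCycle (c : G.OCRSF) (v : G.V) : Prop :=
  ∃ k, 0 < k ∧ c.next^[k] v = v

open Classical in
/-- The forward orbit of a vertex; for a vertex on a cycle this is the vertex
set of its cycle. -/
noncomputable def OCRSF.orbit (c : G.OCRSF) (v : G.V) : Finset G.V :=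
  Finset.univ.filter fun w => ∃ k : ℕ, c.next^[k] v = w

open Classical in
/-- The cycles of the forest, each recorded by its vertex set. -/
noncomputable def OCRSF.cycles (c : G.OCRSF) : Finset (Finset G.V) :=
  (Finset.univ.filter fun v => c.onCycle v).image c.orbit

/-- The connection of the (oriented) cycle through a vertex `v` lying on a
cycle: the product of the connections of its directed edges, starting at `v`. -/
noncomputable def OCRSF.cycConn (c : G.OCRSF) (v : G.V) : Rˣ :=
  ∏ i ∈ Finset.range (Function.minimalPeriod c.next v), c.stepConn (c.next^[i] v)

/-- The factor `1 − φ_C` contributed by an oriented cycle with vertex set `s`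
(this does not depend on the choice of starting vertex in `s`). -/
noncomputable def OCRSF.cycleTerm (c : G.OCRSF) (s : Finset G.V) : R :=
  if h : s.Nonempty then 1 - (c.cycConn h.choose : R) else 1

/-- The weight of an oriented cycle-rooted spanning forest:
`(Π_e σ_e) · Π_{oriented cycles C} (1 − φ_C)`.  Summing the cycle factors over
the two orientations of each cycle yields Forman's factor `2 − φ_C − φ_C⁻¹`. -/
noncomputable def OCRSF.weight (c : G.OCRSF) : R :=
  (∏ v : G.V, G.sign (c.f v)) * ∏ s ∈ c.cycles, c.cycleTerm s

open Classical in
noncomputable instance : Fintype G.OCRSF :=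
  Fintype.ofInjective (fun c => (c.f, c.dir)) (by
    rintro ⟨f₁, d₁, h₁, i₁⟩ ⟨f₂, d₂, h₂, i₂⟩ h
    simp only [Prod.mk.injEq] at h
    obtain ⟨rfl, rfl⟩ := h
    rfl)

end CGraph

/-!
Expanding each row `i` of the Laplacian over the directed edges leaving `i` writes `det L` as a
sum, over the choices of one outgoing directed edge per vertex, of `(∏ σ) · det (1 - P)`, where
`P` is the weighted adjacency matrix of the functional graph `v ↦ next v` of the choice. If some
edge is chosen at both of its ends, the two corresponding rows of `1 - P` are proportional, so
only the oriented cycle-rooted spanning forests survive.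

For a functional graph `g` with weights `w`, `det (1 - P) = ∏_cycles (1 - ∏_{cycle} w)`. Indeed,
if `u i * v (g i) = 0` for all `i` then `P_u P_v = 0`, so `1 - P_{u+v} = (1 - P_u) (1 - P_v)`.
This peels off, one at a time, vertices whose successor carries weight zero (each contributing a
transvection) and whole cycles. A cycle is shortened by adding a multiple of one row to another,
which contracts one of its edges.
-/

open Function Finset Matrix

section PeriodicOrbit

variable {ι : Type*} {g : ι → ι} {x y : ι}

lemma exists_mem_periodicPts_of_mapsTo [Finite ι] {p : ι → Prop} (hp : ∀ x, p x → p (g x))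
    (hx : p x) : ∃ y ∈ periodicPts g, p y := by
  obtain ⟨m, n, hmn, h⟩ := Finite.exists_ne_map_eq_of_infinite fun n => g^[n] x
  wlog hlt : m < n generalizing m n
  · exact this n m hmn.symm h.symm (by omega)
  refine ⟨g^[m] x, mk_mem_periodicPts (Nat.sub_pos_of_lt hlt) ?_, Iterate.rec p hx hp m⟩
  rw [IsPeriodicPt, IsFixedPt, ← iterate_add_apply, Nat.sub_add_cancel hlt.le]
  exact h.symm

lemma List.map_iterate (g : ι → ι) (y : ι) (n : ℕ) :
    (List.iterate g y n).map g = List.iterate g (g y) n := by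
  induction n generalizing y with
  | zero => rfl
  | succ n ih => simp [List.iterate, ih]

lemma exists_periodicOrbit_eq_cons (hy : y ∈ periodicPts g) :
    ∃ l : List ι, periodicOrbit g y = (y :: l : List ι) ∧ (y :: l).Nodup ∧
      (y :: l).map g = l ++ [y] := by
  obtain ⟨m, hm⟩ : ∃ m, minimalPeriod g y = m + 1 :=
    Nat.exists_eq_add_one.2 (minimalPeriod_pos_of_mem_periodicPts hy)
  have horbit : periodicOrbit g y = (List.iterate g y (m + 1) : Cycle ι) := by
    rw [periodicOrbit_def, hm, List.range_map_iterate]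
  refine ⟨List.iterate g (g y) m, horbit, ?_, ?_⟩
  · rw [← Cycle.nodup_coe_iff]
    exact horbit ▸ nodup_periodicOrbit
  · have hlast : g^[m] (g y) = y := by
      rw [← iterate_succ_apply, Nat.succ_eq_add_one, ← hm, iterate_minimalPeriod]
    change (List.iterate g y (m + 1)).map g = _
    rw [List.map_iterate, List.iterate_add, hlast]
    rfl

variable [DecidableEq ι]

lemma mem_periodicOrbit_toFinset (hy : y ∈ periodicPts g) :
    x ∈ (periodicOrbit g y).toFinset ↔ ∃ n, g^[n] y = x := by
  rw [← mem_periodicOrbit_iff hy, periodicOrbit_def, Cycle.coe_toFinset, List.mem_toFinset,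
    Cycle.mem_coe_iff]

lemma self_mem_periodicOrbit_toFinset (hy : y ∈ periodicPts g) :
    y ∈ (periodicOrbit g y).toFinset :=
  (mem_periodicOrbit_toFinset hy).2 ⟨0, rfl⟩

end PeriodicOrbit

section PeriodicOrbitFinsets

variable {ι : Type*} [Fintype ι] [DecidableEq ι] {g : ι → ι} {s t : Finset ι} {x y : ι}

open Classical in
noncomputable def Function.periodicOrbitFinsets (g : ι → ι) : Finset (Finset ι) :=
  (univ.filter (· ∈ periodicPts g)).image fun y => (periodicOrbit g y).toFinset

lemma mem_periodicOrbitFinsets :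
    s ∈ periodicOrbitFinsets g ↔ ∃ y ∈ periodicPts g, (periodicOrbit g y).toFinset = s := by
  classical
  simp [periodicOrbitFinsets]

lemma periodicOrbit_toFinset_mem_periodicOrbitFinsets (hy : y ∈ periodicPts g) :
    (periodicOrbit g y).toFinset ∈ periodicOrbitFinsets g :=
  mem_periodicOrbitFinsets.2 ⟨y, hy, rfl⟩

lemma eq_periodicOrbit_toFinset_of_mem (hs : s ∈ periodicOrbitFinsets g) (hx : x ∈ s) :
    x ∈ periodicPts g ∧ s = (periodicOrbit g x).toFinset := by
  obtain ⟨y, hy, rfl⟩ := mem_periodicOrbitFinsets.1 hs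
  obtain ⟨n, rfl⟩ := (mem_periodicOrbit_toFinset hy).1 hx
  exact ⟨mk_mem_periodicPts (minimalPeriod_pos_of_mem_periodicPts hy)
    ((isPeriodicPt_minimalPeriod g y).apply_iterate n), by rw [periodicOrbit_apply_iterate_eq hy]⟩

lemma nonempty_of_mem_periodicOrbitFinsets (hs : s ∈ periodicOrbitFinsets g) : s.Nonempty := by
  obtain ⟨y, hy, rfl⟩ := mem_periodicOrbitFinsets.1 hs
  exact ⟨y, self_mem_periodicOrbit_toFinset hy⟩

lemma apply_mem_of_mem_periodicOrbitFinsets (hs : s ∈ periodicOrbitFinsets g) (hx : x ∈ s) :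
    g x ∈ s := by
  obtain ⟨hx', rfl⟩ := eq_periodicOrbit_toFinset_of_mem hs hx
  exact (mem_periodicOrbit_toFinset hx').2 ⟨1, rfl⟩

lemma eq_of_mem_periodicOrbitFinsets (hs : s ∈ periodicOrbitFinsets g)
    (ht : t ∈ periodicOrbitFinsets g) (hxs : x ∈ s) (hxt : x ∈ t) : s = t :=
  (eq_periodicOrbit_toFinset_of_mem hs hxs).2.trans (eq_periodicOrbit_toFinset_of_mem ht hxt).2.symm

lemma prod_eq_prod_range_minimalPeriod {M : Type*} [CommMonoid M] (f : ι → M)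
    (hs : s ∈ periodicOrbitFinsets g) (hx : x ∈ s) :
    ∏ y ∈ s, f y = ∏ i ∈ range (minimalPeriod g x), f (g^[i] x) := by
  obtain ⟨-, rfl⟩ := eq_periodicOrbit_toFinset_of_mem hs hx
  have himage : (periodicOrbit g x).toFinset = (range (minimalPeriod g x)).image (g^[·] x) := by
    ext
    simp [periodicOrbit_def, eq_comm]
  rw [himage, prod_image fun i hi j hj hij =>
    iterate_injOn_Iio_minimalPeriod (by simpa using hi) (by simpa using hj) hij]

end PeriodicOrbitFinsets

section FunGraphMatrix

variable {R : Type*} [CommRing R] {ι : Type*} [DecidableEq ι]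

def funGraphMatrix (g : ι → ι) (w : ι → R) : Matrix ι ι R :=
  of fun i j => if g i = j then w i else 0

variable {g : ι → ι} {u v w : ι → R}

lemma funGraphMatrix_apply (i j : ι) :
    funGraphMatrix g w i j = if g i = j then w i else 0 := rfl

lemma funGraphMatrix_add : funGraphMatrix g (u + v) = funGraphMatrix g u + funGraphMatrix g v := by
  ext i j
  simp only [funGraphMatrix_apply, Matrix.add_apply, Pi.add_apply]
  split_ifs <;> simp

variable [Fintype ι]

lemma funGraphMatrix_mul_funGraphMatrix (h : ι → ι) :
    funGraphMatrix g u * funGraphMatrix h v = funGraphMatrix (h ∘ g) fun i => u i * v (g i) := by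
  ext i j
  simp only [funGraphMatrix_apply, Matrix.mul_apply, mul_ite, ite_mul, mul_zero, zero_mul,
    Function.comp_apply]
  rw [sum_eq_single (g i) (fun k _ hk => by simp [Ne.symm hk]) (by simp)]
  simp

lemma det_one_sub_funGraphMatrix_add (huv : ∀ i, u i * v (g i) = 0) :
    (1 - funGraphMatrix g (u + v)).det
      = (1 - funGraphMatrix g u).det * (1 - funGraphMatrix g v).det := by
  have hzero : funGraphMatrix g u * funGraphMatrix g v = 0 := by
    ext i j
    simp [funGraphMatrix_mul_funGraphMatrix, funGraphMatrix_apply, huv]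
  rw [← det_mul, funGraphMatrix_add]
  congr 1
  noncomm_ring [hzero]

lemma det_one_sub_funGraphMatrix_single {x : ι} (hx : g x ≠ x) (c : R) :
    (1 - funGraphMatrix g (Pi.single x c)).det = 1 := by
  have htrans : 1 - funGraphMatrix g (Pi.single x c) = transvection x (g x) (-c) := by
    ext i j
    by_cases hi : i = x
    · subst hi
      by_cases hj : g i = j
      · subst hj
        simp [funGraphMatrix_apply, transvection, hx.symm]
      · simp [funGraphMatrix_apply, transvection, Matrix.one_apply, hj]
    · simp [funGraphMatrix_apply, transvection, Matrix.one_apply, Ne.symm hi]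
  rw [htrans, det_transvection_of_ne _ _ hx.symm]

lemma det_one_sub_funGraphMatrix_update_of_sink {x : ι} (hx : w (g x) = 0) (hgx : g x ≠ x) :
    (1 - funGraphMatrix g w).det = (1 - funGraphMatrix g (update w x 0)).det := by
  have hw : w = Pi.single x (w x) + update w x 0 := by
    ext i
    by_cases hi : i = x <;> simp [hi]
  conv_lhs => rw [hw]
  rw [det_one_sub_funGraphMatrix_add fun i => ?_, det_one_sub_funGraphMatrix_single hgx, one_mul]
  by_cases hi : i = x
  · subst hi
    simp [hgx, hx]
  · simp [hi]

lemma det_one_sub_funGraphMatrix_update_of_source {x : ι} (hx : ∀ i ≠ x, g i = x → w i = 0)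
    (hgx : g x ≠ x) :
    (1 - funGraphMatrix g w).det = (1 - funGraphMatrix g (update w x 0)).det := by
  have hw : w = update w x 0 + Pi.single x (w x) := by
    ext i
    by_cases hi : i = x <;> simp [hi]
  conv_lhs => rw [hw]
  rw [det_one_sub_funGraphMatrix_add fun i => ?_, det_one_sub_funGraphMatrix_single hgx, mul_one]
  by_cases hi : i = x
  · subst hi
    simp
  · by_cases hgi : g i = x
    · simp [hi, hx i hi hgi]
    · simp [hgi]

lemma det_one_sub_funGraphMatrix_shortcut {x : ι} (hx : g x ≠ x) :
    (1 - funGraphMatrix g w).det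
      = (1 - funGraphMatrix (update g x (g (g x))) (update w x (w x * w (g x)))).det := by
  have hrow : transvection x (g x) (w x) * (1 - funGraphMatrix g w)
      = 1 - funGraphMatrix (update g x (g (g x))) (update w x (w x * w (g x))) := by
    ext i j
    by_cases hi : i = x
    · subst hi
      simp only [transvection_mul_apply_same, Matrix.sub_apply, Matrix.one_apply,
        funGraphMatrix_apply, update_self]
      split_ifs <;> simp_all <;> ring
    · simp [transvection_mul_apply_of_ne _ _ _ _ hi, funGraphMatrix_apply, hi]
  rw [← hrow, det_mul, det_transvection_of_ne _ _ hx.symm, one_mul]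

/-- After the shortcut `x → g (g x)`, the vertex `g x` has no weighted predecessor and drops
out. -/
lemma det_one_sub_funGraphMatrix_contract {x : ι} (hx : g x ≠ x) (hgx : g (g x) ≠ g x)
    (hpred : ∀ i ≠ x, g i = g x → w i = 0) :
    (1 - funGraphMatrix g w).det = (1 - funGraphMatrix (update g x (g (g x)))
      (update (update w x (w x * w (g x))) (g x) 0)).det := by
  rw [det_one_sub_funGraphMatrix_shortcut hx]
  refine det_one_sub_funGraphMatrix_update_of_source (fun i hi hgi => ?_) ?_
  · rcases eq_or_ne i x with rfl | hix
    · exact absurd (by simpa using hgi) hgx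
    · simp_all
  · rwa [update_of_ne hx]

lemma det_one_sub_funGraphMatrix_of_isFixedPt {x : ι} (hx : g x = x) (hw : ∀ i ≠ x, w i = 0) :
    (1 - funGraphMatrix g w).det = 1 - w x := by
  have hdiag : 1 - funGraphMatrix g w = diagonal (1 - w) := by
    ext i j
    by_cases hi : i = x
    · subst hi
      by_cases hj : i = j
      · subst hj
        simp [funGraphMatrix_apply, hx]
      · simp [funGraphMatrix_apply, hx, hj]
    · simp [funGraphMatrix_apply, Matrix.one_apply, diagonal_apply, hw i hi]
  rw [hdiag, det_diagonal, prod_eq_single x (fun i _ hi => by simp [hw i hi]) (by simp)]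
  rfl

lemma det_one_sub_funGraphMatrix_of_cycle (l : List ι) (x : ι) (hl : (x :: l).Nodup)
    (hg : (x :: l).map g = l ++ [x]) (hw : ∀ i, w i ≠ 0 → i ∈ x :: l) :
    (1 - funGraphMatrix g w).det = 1 - ((x :: l).map w).prod := by
  induction l generalizing g w with
  | nil =>
    simp only [List.map_cons, List.map_nil, List.nil_append, List.cons.injEq, and_true] at hg
    simp only [List.map_cons, List.map_nil, List.prod_singleton]
    exact det_one_sub_funGraphMatrix_of_isFixedPt hg fun i hi => by
      by_contra h
      simpa [hi] using hw i h
  | cons y l ih =>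
    simp only [List.map_cons, List.cons_append, List.cons.injEq] at hg
    obtain ⟨hgx, hgl⟩ := hg
    obtain ⟨hxl', hl'⟩ := List.nodup_cons.1 hl
    have hxy : x ≠ y := fun h => hxl' (h ▸ List.mem_cons_self)
    have hxl : x ∉ l := fun h => hxl' (List.mem_cons_of_mem _ h)
    have hyl : y ∉ l := (List.nodup_cons.1 hl').1
    have hyl' : y ∉ l ++ [x] := by simpa [hxy.symm] using hyl
    have hlands : ∀ i ∈ y :: l, g i ∈ l ++ [x] := fun i hi => by
      rw [← hgl, ← List.map_cons]
      exact List.mem_map_of_mem hi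
    have hcontract := det_one_sub_funGraphMatrix_contract (w := w) (hgx ▸ hxy.symm)
      (hgx ▸ fun h => hyl' (h ▸ hlands y List.mem_cons_self))
      fun i hix hgi => by_contra fun h => hyl' <| by
        rw [← hgx, ← hgi]
        exact hlands i (by simpa [hix] using hw i h)
    rw [hgx] at hcontract
    rw [hcontract, ih (hl.sublist (by simp)) ?_ fun i hi => ?_]
    · have hmap : l.map (update (update w x (w x * w y)) y 0) = l.map w :=
        List.map_congr_left fun a ha => by
          simp [ne_of_mem_of_not_mem ha hyl, ne_of_mem_of_not_mem ha hxl]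
      simp [hmap, hxy, mul_assoc]
    · rw [List.map_cons, update_self, ← hgl,
        List.map_congr_left fun a ha => update_of_ne (ne_of_mem_of_not_mem ha hxl) ..]
    · have hiy : i ≠ y := by
        rintro rfl
        simp at hi
      rcases eq_or_ne i x with rfl | hix
      · exact List.mem_cons_self
      · simpa [hiy] using hw i (by simpa [hix, hiy] using hi)

lemma det_one_sub_funGraphMatrix_eq_zero_of_two_cycle {a b : ι} (hab : a ≠ b) (ha : g a = b)
    (hb : g b = a) (hw : w a * w b = 1) : (1 - funGraphMatrix g w).det = 0 := by
  have hrow : (1 - funGraphMatrix g w) b = -w b • (1 - funGraphMatrix g w) a := by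
    ext j
    simp only [Pi.smul_apply, smul_eq_mul, Matrix.sub_apply, Matrix.one_apply, funGraphMatrix_apply,
      ha, hb]
    by_cases hja : a = j
    · subst hja
      simp [hab.symm]
    · by_cases hjb : b = j
      · subst hjb
        simp only [if_neg hab, if_true]
        linear_combination -hw
      · simp [hja, hjb]
  rw [← updateRow_eq_self (1 - funGraphMatrix g w) b, hrow, det_updateRow_smul,
    det_zero_of_row_eq hab (by simp [updateRow_ne hab]), mul_zero]

lemma prod_periodicOrbitFinsets_update_of_sink {x : ι} (hx : w (g x) = 0) :
    ∏ s ∈ periodicOrbitFinsets g, (1 - ∏ i ∈ s, w i)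
      = ∏ s ∈ periodicOrbitFinsets g, (1 - ∏ i ∈ s, update w x 0 i) := by
  refine prod_congr rfl fun s hs => ?_
  by_cases hxs : x ∈ s
  · have hgx := apply_mem_of_mem_periodicOrbitFinsets hs hxs
    rw [prod_eq_zero hgx hx, prod_eq_zero hgx (by by_cases h : g x = x <;> simp [h, hx])]
  · rw [prod_congr rfl fun i hi => update_of_ne (ne_of_mem_of_not_mem hi hxs) ..]

lemma prod_periodicOrbitFinsets_split_cycle {c : Finset ι} (hc : c ∈ periodicOrbitFinsets g) :
    ∏ s ∈ periodicOrbitFinsets g, (1 - ∏ i ∈ s, w i)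
      = (1 - ∏ i ∈ c, w i) *
        ∏ s ∈ periodicOrbitFinsets g, (1 - ∏ i ∈ s, if i ∈ c then 0 else w i) := by
  obtain ⟨y, hy⟩ := nonempty_of_mem_periodicOrbitFinsets hc
  have hzero : ∏ i ∈ c, (if i ∈ c then 0 else w i) = 0 := prod_eq_zero hy (if_pos hy)
  rw [← mul_prod_erase _ _ hc, ← mul_prod_erase _ _ hc, hzero, sub_zero, one_mul]
  refine congrArg _ (prod_congr rfl fun s hs => ?_)
  obtain ⟨hne, hs⟩ := mem_erase.1 hs
  refine congrArg _ (prod_congr rfl fun i hi => (if_neg fun hic => hne ?_).symm)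
  exact eq_of_mem_periodicOrbitFinsets hs hc hi hic

lemma det_one_sub_funGraphMatrix_split_cycle {c : Finset ι} (hc : c ∈ periodicOrbitFinsets g) :
    (1 - funGraphMatrix g w).det
      = (1 - ∏ i ∈ c, w i) * (1 - funGraphMatrix g fun i => if i ∈ c then 0 else w i).det := by
  set u : ι → R := fun i => if i ∈ c then w i else 0
  have hw : w = u + fun i => if i ∈ c then 0 else w i := by
    ext i
    by_cases hi : i ∈ c <;> simp [u, hi]
  have hsplit : ∀ i, u i * (if g i ∈ c then 0 else w (g i)) = 0 := fun i => by
    by_cases hi : i ∈ c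
    · simp [apply_mem_of_mem_periodicOrbitFinsets hc hi]
    · simp [u, hi]
  obtain ⟨y, hy, rfl⟩ := mem_periodicOrbitFinsets.1 hc
  obtain ⟨l, hl, hnd, hmap⟩ := exists_periodicOrbit_eq_cons hy
  have hmem : ∀ i, i ∈ (periodicOrbit g y).toFinset ↔ i ∈ y :: l := by
    simp [hl]
  have hcycle : (1 - funGraphMatrix g u).det = 1 - ∏ i ∈ (periodicOrbit g y).toFinset, w i := by
    rw [det_one_sub_funGraphMatrix_of_cycle l y hnd hmap fun i hi => ?_, hl, Cycle.coe_toFinset,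
      List.prod_toFinset _ hnd, List.map_congr_left fun i hi => if_pos ((hmem i).2 hi)]
    by_contra h
    exact hi (if_neg (mt (hmem i).1 h))
  conv_lhs => rw [hw]
  rw [det_one_sub_funGraphMatrix_add hsplit, hcycle]

omit [DecidableEq ι] in
open Classical in
lemma card_filter_ne_zero_lt {w' : ι → R} (hsupp : ∀ i, w' i ≠ 0 → w i ≠ 0) {x : ι}
    (hx : w x ≠ 0) (hx' : w' x = 0) : #{i | w' i ≠ 0} < #{i | w i ≠ 0} :=
  card_lt_card <| (ssubset_iff_of_subset fun i => by simpa using hsupp i).2 ⟨x, by simpa, by simpa⟩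

theorem det_one_sub_funGraphMatrix (g : ι → ι) (w : ι → R) :
    (1 - funGraphMatrix g w).det = ∏ s ∈ periodicOrbitFinsets g, (1 - ∏ i ∈ s, w i) := by
  classical
  induction hn : #{i | w i ≠ 0} using Nat.strong_induction_on generalizing w with
  | _ n ih =>
  subst hn
  have ih' : ∀ w' : ι → R, (∀ i, w' i ≠ 0 → w i ≠ 0) → ∀ x, w x ≠ 0 → w' x = 0 →
      (1 - funGraphMatrix g w').det = ∏ s ∈ periodicOrbitFinsets g, (1 - ∏ i ∈ s, w' i) :=
    fun w' hsupp x hx hx' => ih _ (card_filter_ne_zero_lt hsupp hx hx') w' rfl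
  -- Either an edge leaves the support of `w`, and its tail is dropped from the support, or the
  -- support is closed under `g`, hence contains a cycle, which is split off.
  by_cases hsink : ∃ x, w x ≠ 0 ∧ w (g x) = 0
  · obtain ⟨x, hx, hgx⟩ := hsink
    rw [det_one_sub_funGraphMatrix_update_of_sink hgx fun h => hx (h ▸ hgx),
      prod_periodicOrbitFinsets_update_of_sink hgx]
    exact ih' _ (fun i hi => by by_cases h : i = x <;> simp_all) x hx (by simp)
  push Not at hsink
  by_cases hw : ∃ x, w x ≠ 0
  · obtain ⟨x, hx⟩ := hw
    obtain ⟨y, hy, hwy⟩ := exists_mem_periodicPts_of_mapsTo (p := (w · ≠ 0)) hsink hx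
    set c := (periodicOrbit g y).toFinset
    have hc : c ∈ periodicOrbitFinsets g := periodicOrbit_toFinset_mem_periodicOrbitFinsets hy
    rw [det_one_sub_funGraphMatrix_split_cycle hc, prod_periodicOrbitFinsets_split_cycle hc,
      ih' _ (fun i hi => by by_cases h : i ∈ c <;> simp_all) y hwy
        (if_pos (self_mem_periodicOrbit_toFinset hy))]
  · push Not at hw
    obtain rfl : w = 0 := funext hw
    have hzero : funGraphMatrix g (0 : ι → R) = 0 := by
      ext
      simp [funGraphMatrix_apply]
    rw [hzero, sub_zero, det_one]
    refine (prod_eq_one fun s hs => ?_).symm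
    obtain ⟨y, hy⟩ := nonempty_of_mem_periodicOrbitFinsets hs
    rw [prod_eq_zero hy rfl, sub_zero]

end FunGraphMatrix

namespace CGraph

variable {R : Type} [CommRing R] (G : CGraph R)

def dTail (d : G.E × Bool) : G.V := if d.2 then G.src d.1 else G.tgt d.1

def dHead (d : G.E × Bool) : G.V := if d.2 then G.tgt d.1 else G.src d.1

def dConn (d : G.E × Bool) : Rˣ := if d.2 then G.conn d.1 else (G.conn d.1)⁻¹

lemma dHead_eq_dTail_of_fst_eq {d d' : G.E × Bool} (h₁ : d.1 = d'.1) (h₂ : d.2 ≠ d'.2) :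
    G.dHead d = G.dTail d' := by
  obtain ⟨e, b⟩ := d
  obtain ⟨e', b'⟩ := d'
  obtain rfl : e = e' := h₁
  cases b <;> cases b' <;> simp_all [dHead, dTail]

lemma dConn_mul_dConn_of_fst_eq {d d' : G.E × Bool} (h₁ : d.1 = d'.1) (h₂ : d.2 ≠ d'.2) :
    G.dConn d * G.dConn d' = 1 := by
  obtain ⟨e, b⟩ := d
  obtain ⟨e', b'⟩ := d'
  obtain rfl : e = e' := h₁
  cases b <;> cases b' <;> simp_all [dConn]

lemma lap_apply_eq_sum (i j : G.V) :
    G.lap i j = ∑ d ∈ univ.filter (G.dTail · = i),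
      G.sign d.1 * ((1 : Matrix G.V G.V R) i j - if G.dHead d = j then (G.dConn d : R) else 0) := by
  rw [lap, Matrix.sub_apply, diagonal_apply, deg, adj, ite_sum_zero, ← sum_sub_distrib, sum_filter,
    Fintype.sum_prod_type]
  refine sum_congr rfl fun e _ => ?_
  simp only [Fintype.sum_bool, dTail, dHead, dConn, Matrix.one_apply, if_true, Bool.false_eq_true,
    if_false]
  split_ifs <;> simp_all
  ring

def outEdgeChoices : Finset (G.V → G.E × Bool) :=
  Fintype.piFinset fun i => univ.filter (G.dTail · = i)

variable {G} in
lemma mem_outEdgeChoices {r : G.V → G.E × Bool} :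
    r ∈ G.outEdgeChoices ↔ ∀ i, G.dTail (r i) = i := by
  simp [outEdgeChoices]

noncomputable def choiceTerm (r : G.V → G.E × Bool) : R :=
  (∏ i, G.sign (r i).1) * (1 - funGraphMatrix (G.dHead ∘ r) fun i => (G.dConn (r i) : R)).det

lemma lapDet_eq_sum_choiceTerm : G.lapDet = ∑ r ∈ G.outEdgeChoices, G.choiceTerm r := by
  have hrows : G.lap = of fun i => ∑ d ∈ univ.filter (G.dTail · = i), fun j =>
      G.sign d.1 * ((1 : Matrix G.V G.V R) i j - if G.dHead d = j then (G.dConn d : R) else 0) := by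
    ext i j
    rw [lap_apply_eq_sum]
    simp [Finset.sum_apply]
  rw [lapDet, hrows]
  refine ((detRowAlternating : (G.V → R) [⋀^G.V]→ₗ[R] R).toMultilinearMap.map_sum_finset _ _).trans
    (sum_congr rfl fun r _ => ?_)
  rw [choiceTerm, ← det_mul_column]
  rfl

variable {G}

lemma choiceTerm_eq_zero {r : G.V → G.E × Bool} (hr : r ∈ G.outEdgeChoices)
    (hinj : ¬ Injective fun i => (r i).1) : G.choiceTerm r = 0 := by
  obtain ⟨a, b, hfst, hab⟩ := not_injective_iff.1 hinj
  have hsnd : (r a).2 ≠ (r b).2 := fun h => hab <| by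
    rw [← mem_outEdgeChoices.1 hr a, ← mem_outEdgeChoices.1 hr b, Prod.ext hfst h]
  rw [choiceTerm, det_one_sub_funGraphMatrix_eq_zero_of_two_cycle hab, mul_zero]
  · simp [G.dHead_eq_dTail_of_fst_eq hfst hsnd, mem_outEdgeChoices.1 hr b]
  · simp [G.dHead_eq_dTail_of_fst_eq hfst.symm hsnd.symm, mem_outEdgeChoices.1 hr a]
  · rw [← Units.val_mul, G.dConn_mul_dConn_of_fst_eq hfst hsnd, Units.val_one]

namespace OCRSF

variable (c : G.OCRSF)

def toChoice : G.V → G.E × Bool := fun v => (c.f v, c.dir v)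

lemma toChoice_injective : Injective (toChoice (G := G)) := by
  rintro ⟨f₁, d₁, h₁, i₁⟩ ⟨f₂, d₂, h₂, i₂⟩ h
  obtain rfl : f₁ = f₂ := funext fun v => congrArg Prod.fst (congrFun h v)
  obtain rfl : d₁ = d₂ := funext fun v => congrArg Prod.snd (congrFun h v)
  rfl

lemma orbit_eq {v : G.V} (hv : v ∈ periodicPts c.next) :
    c.orbit v = (periodicOrbit c.next v).toFinset := by
  ext
  simp [orbit, mem_periodicOrbit_toFinset hv]

lemma cycles_eq : c.cycles = periodicOrbitFinsets c.next := by
  ext s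
  simp only [cycles, mem_image, mem_filter, mem_univ, true_and, mem_periodicOrbitFinsets]
  exact exists_congr fun v => and_congr_right fun hv => by rw [c.orbit_eq hv]

lemma cycleTerm_eq {s : Finset G.V} (hs : s ∈ periodicOrbitFinsets c.next) :
    c.cycleTerm s = 1 - ∏ v ∈ s, (c.stepConn v : R) := by
  have hne := nonempty_of_mem_periodicOrbitFinsets hs
  rw [cycleTerm, dif_pos hne, cycConn, Units.coe_prod,
    prod_eq_prod_range_minimalPeriod _ hs hne.choose_spec]

lemma choiceTerm_toChoice : G.choiceTerm c.toChoice = c.weight := by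
  rw [choiceTerm, weight, cycles_eq]
  congr 1
  exact (det_one_sub_funGraphMatrix c.next fun v => (c.stepConn v : R)).trans
    (prod_congr rfl fun s hs => (c.cycleTerm_eq hs).symm)

end OCRSF

lemma sum_filter_injective_outEdgeChoices {M : Type*} [AddCommMonoid M]
    (F : (G.V → G.E × Bool) → M) :
    ∑ r ∈ G.outEdgeChoices with Injective fun i => (r i).1, F r = ∑ c : G.OCRSF, F c.toChoice := by
  refine (sum_nbij OCRSF.toChoice (fun c _ => ?_) OCRSF.toChoice_injective.injOn (fun r hr => ?_)
    fun _ _ => rfl).symm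
  · exact mem_filter.2 ⟨mem_outEdgeChoices.2 c.hsrc, c.hinj⟩
  · obtain ⟨hr, hinj⟩ := mem_filter.1 hr
    exact ⟨⟨fun v => (r v).1, fun v => (r v).2, mem_outEdgeChoices.1 hr, hinj⟩, mem_univ _, rfl⟩

end CGraph

theorem lapDet_eq_sum_ocrsf_general {R : Type} [CommRing R] (G : CGraph R) :
    G.lapDet = ∑ c : G.OCRSF, c.weight := by
  calc G.lapDet = ∑ r ∈ G.outEdgeChoices, G.choiceTerm r := G.lapDet_eq_sum_choiceTerm
    _ = ∑ r ∈ G.outEdgeChoices with Injective fun i => (r i).1, G.choiceTerm r :=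
      (sum_filter_of_ne fun r hr h =>
        by_contra fun hinj => h (CGraph.choiceTerm_eq_zero hr hinj)).symm
    _ = ∑ c : G.OCRSF, c.weight := by
      rw [CGraph.sum_filter_injective_outEdgeChoices]
      exact sum_congr rfl fun c _ => c.choiceTerm_toChoice

/-- Forman's theorem: the Laplacian determinant of `G` is the sum over all
cycle-rooted spanning forests `F` of `G` of
`(Π_{e ∈ E_F} σ_e) · Π_{cycles C of F} (2 − φ_C − φ_C⁻¹)`; here each
unoriented forest is counted through its `2^{#cycles}` cycle orientations, an
oriented cycle `C` contributing `1 − φ_C`. -/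
theorem lapDet_eq_sum_ocrsf {R : Type} [CommRing R] (G : CGraph R)
    (hsign : ∀ e, G.sign e = 1 ∨ G.sign e = -1) :
    G.lapDet = ∑ c : G.OCRSF, c.weight :=
  lapDet_eq_sum_ocrsf_general G
end
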